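/- arXiv:1804.08418 — 2 statements merged into one kernel-verified Lean document; each statement's English description precedes it below -/
import Mathlib

section
/- Let A ∈ ℝ^{m×n}. If the set-valued mapping x ↦ Ax + ℝ^m_+ is surjective (i.e., Aℝ^n + ℝ^m_+ = ℝ^m), then H(A) = max_{y∈ℝ^m, ‖y‖≤1} min{‖x‖ : Ax ≤ y} = max{ ‖v‖* : v ∈ ℝ^m_+, ‖Aᵀ v‖* ≤ 1 } = 1 / min{ ‖Aᵀ v‖* : v ∈ ℝ^m_+, ‖v‖* = 1 }. -/
open Matrix Metric

/-- `J ⊆ {1,…,m}` is `A`-surjective: `A_J ℝ^n + ℝ^J_+ = ℝ^J`. -/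
def ASurj {m n : ℕ} (A : Matrix (Fin m) (Fin n) ℝ) (J : Set (Fin m)) : Prop :=
  ∀ w : Fin m → ℝ, ∃ x : Fin n → ℝ, ∀ i ∈ J, A.mulVec x i ≤ w i

/-- `H_J(A) = max_{‖v‖ ≤ 1} min{‖x‖ : A_J x ≤ v_J}` (which is `0` for `J = ∅`). -/
noncomputable def HJ {m n : ℕ} (A : Matrix (Fin m) (Fin n) ℝ) (J : Set (Fin m)) : ℝ :=
  sSup {t | ∃ v : Fin m → ℝ, ‖v‖ ≤ 1 ∧
    t = sInf {r | ∃ x : Fin n → ℝ, (∀ i ∈ J, A.mulVec x i ≤ v i) ∧ r = ‖x‖}}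

/-- The Hoffman constant `H(A) = max_{J ∈ S(A)} H_J(A)`. -/
noncomputable def HoffA {m n : ℕ} (A : Matrix (Fin m) (Fin n) ℝ) : ℝ :=
  sSup {t | ∃ J : Set (Fin m), ASurj A J ∧ t = HJ A J}

/-- The dual norm `‖v‖* = max_{‖x‖ ≤ 1} ⟨v, x⟩`. -/
noncomputable def dualNorm {d : ℕ} (v : Fin d → ℝ) : ℝ :=
  sSup {t | ∃ x : Fin d → ℝ, ‖x‖ ≤ 1 ∧ t = ∑ i, v i * x i}

/-!
Here `Fin m → ℝ` carries the sup norm, so `dualNorm` is the `ℓ¹` norm.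

Surjectivity yields `x₀` with `A x₀ ≤ -1`; rescaling it shows every `J` is `A`-surjective and
every feasible set below is nonempty. Since `‖y‖ ≤ 1` forces `-1 ≤ y`, each `H_J(A)` is at most
`α = min {‖x‖ : A x ≤ -1}`, which is attained for `J` the set of all rows and `y = -1`.
Weak duality is `∑ vᵢ ≤ ‖Aᵀ v‖* ‖x‖` for `v ≥ 0`, `A x ≤ -1`. For strong duality, if no `x` with
`‖x‖ ≤ γ` satisfies `A x ≤ -1`, then `-1` lies outside the closed convex set
`A (closedBall 0 γ) + ℝ^m_+`, and a separating functional is a `v ≥ 0` with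
`γ ‖Aᵀ v‖* < ∑ vᵢ`. The last formula is the dual problem rescaled to `‖v‖* = 1`.
-/

lemma sSup_eq_one_div_sInf_of_reciprocal {D T : Set ℝ} (hD : BddAbove D) (hD₀ : ∀ s ∈ D, 0 ≤ s)
    (hT : ∀ t ∈ T, 0 < t) (hTD : ∀ t ∈ T, 1 / t ∈ D) (hDT : ∀ s ∈ D, 0 < s → ∃ t ∈ T, s * t ≤ 1) :
    sSup D = 1 / sInf T := by
  rcases T.eq_empty_or_nonempty with rfl | ⟨t₀, ht₀⟩
  · rw [Real.sInf_empty, div_zero]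
    refine le_antisymm (Real.sSup_nonpos fun s hs => not_lt.1 fun hs₀ => ?_) (Real.sSup_nonneg hD₀)
    obtain ⟨t, ht, -⟩ := hDT s hs hs₀
    exact ht
  have hSup : 0 < sSup D := (one_div_pos.2 (hT t₀ ht₀)).trans_le (le_csSup hD (hTD t₀ ht₀))
  have hInf : 1 / sSup D ≤ sInf T := le_csInf ⟨t₀, ht₀⟩ fun t ht =>
    (one_div_le hSup (hT t ht)).2 (le_csSup hD (hTD t ht))
  have hInf₀ : 0 < sInf T := (one_div_pos.2 hSup).trans_le hInf
  refine le_antisymm (csSup_le ⟨_, hTD t₀ ht₀⟩ fun s hs => ?_) ((one_div_le hInf₀ hSup).2 hInf)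
  rcases (hD₀ s hs).eq_or_lt with rfl | hs₀
  · positivity
  obtain ⟨t, ht, hst⟩ := hDT s hs hs₀
  rw [le_div_iff₀ hInf₀]
  exact (mul_le_mul_of_nonneg_left (csInf_le ⟨0, fun t ht => (hT t ht).le⟩ ht) hs₀.le).trans hst

section DualNorm

variable {d : ℕ}

lemma dotProduct_le_sum_abs_mul_norm (w x : Fin d → ℝ) : w ⬝ᵥ x ≤ (∑ i, |w i|) * ‖x‖ := by
  rw [dotProduct, Finset.sum_mul]
  refine Finset.sum_le_sum fun i _ => ?_
  calc w i * x i ≤ |w i * x i| := le_abs_self _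
    _ = |w i| * ‖x i‖ := by rw [abs_mul, Real.norm_eq_abs]
    _ ≤ |w i| * ‖x‖ := by gcongr; exact norm_le_pi_norm x i

lemma isGreatest_dotProduct_unitBall (w : Fin d → ℝ) :
    IsGreatest {t | ∃ x : Fin d → ℝ, ‖x‖ ≤ 1 ∧ t = ∑ i, w i * x i} (∑ i, |w i|) := by
  refine ⟨⟨fun i => SignType.sign (w i), ?_, ?_⟩, ?_⟩
  · refine (pi_norm_le_iff_of_nonneg zero_le_one).2 fun i => ?_
    rcases lt_trichotomy (w i) 0 with h | h | h <;> simp [h]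
  · exact Finset.sum_congr rfl fun i _ => (self_mul_sign (w i)).symm
  · rintro t ⟨x, hx, rfl⟩
    exact (dotProduct_le_sum_abs_mul_norm w x).trans
      (mul_le_of_le_one_right (Finset.sum_nonneg fun i _ => abs_nonneg (w i)) hx)

lemma dualNorm_eq_sum_abs (w : Fin d → ℝ) : dualNorm w = ∑ i, |w i| :=
  (isGreatest_dotProduct_unitBall w).csSup_eq

lemma dualNorm_nonneg (w : Fin d → ℝ) : 0 ≤ dualNorm w := by
  rw [dualNorm_eq_sum_abs]
  positivity

lemma dualNorm_of_nonneg {w : Fin d → ℝ} (hw : 0 ≤ w) : dualNorm w = ∑ i, w i := by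
  rw [dualNorm_eq_sum_abs]
  exact Finset.sum_congr rfl fun i _ => abs_of_nonneg (hw i)

lemma dualNorm_smul_of_nonneg {c : ℝ} (hc : 0 ≤ c) (w : Fin d → ℝ) :
    dualNorm (c • w) = c * dualNorm w := by
  simp [dualNorm_eq_sum_abs, abs_mul, abs_of_nonneg hc, Finset.mul_sum]

lemma dotProduct_le_dualNorm_mul_norm (w x : Fin d → ℝ) : w ⬝ᵥ x ≤ dualNorm w * ‖x‖ :=
  dualNorm_eq_sum_abs w ▸ dotProduct_le_sum_abs_mul_norm w x

lemma exists_norm_le_one_dotProduct_eq_dualNorm (w : Fin d → ℝ) :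
    ∃ x : Fin d → ℝ, ‖x‖ ≤ 1 ∧ w ⬝ᵥ x = dualNorm w := by
  obtain ⟨x, hx, h⟩ := (isGreatest_dotProduct_unitBall w).1
  exact ⟨x, hx, by rw [dualNorm_eq_sum_abs, h]; rfl⟩

lemma neg_norm_le_apply (y : Fin d → ℝ) (i : Fin d) : -‖y‖ ≤ y i :=
  neg_le_of_abs_le (Real.norm_eq_abs (y i) ▸ norm_le_pi_norm y i)

end DualNorm

lemma exists_dotProduct_lt_of_notMem {ι : Type*} [Fintype ι] [DecidableEq ι]
    {C : Set (ι → ℝ)} (hC : Convex ℝ C) (hCclosed : IsClosed C) {p : ι → ℝ} (hp : p ∉ C) :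
    ∃ (v : ι → ℝ) (u : ℝ), v ⬝ᵥ p < u ∧ ∀ b ∈ C, u < v ⬝ᵥ b := by
  obtain ⟨f, u, hfu, hCu⟩ := geometric_hahn_banach_point_closed hC hCclosed hp
  have hf : ∀ w, f w = (dotProductEquiv ℝ ι).symm f ⬝ᵥ w := fun w => (LinearMap.congr_fun
    ((dotProductEquiv ℝ ι).apply_symm_apply (f : Module.Dual ℝ (ι → ℝ))) w).symm
  exact ⟨_, u, hf p ▸ hfu, fun b hb => hf b ▸ hCu b hb⟩

section Hoffman

variable {m n : ℕ} {A : Matrix (Fin m) (Fin n) ℝ}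

noncomputable def minNormBelowNegOne (A : Matrix (Fin m) (Fin n) ℝ) : ℝ :=
  sInf {r | ∃ x : Fin n → ℝ, A *ᵥ x ≤ -1 ∧ r = ‖x‖}

lemma sInf_feasible_le_minNormBelowNegOne {x₀ : Fin n → ℝ} (hx₀ : A *ᵥ x₀ ≤ -1)
    (J : Set (Fin m)) {y : Fin m → ℝ} (hy : ‖y‖ ≤ 1) :
    sInf {r | ∃ x : Fin n → ℝ, (∀ i ∈ J, A.mulVec x i ≤ y i) ∧ r = ‖x‖} ≤
      minNormBelowNegOne A :=
  csInf_le_csInf ⟨0, by rintro _ ⟨x, -, rfl⟩; exact norm_nonneg x⟩ ⟨_, x₀, hx₀, rfl⟩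
    (by
      rintro _ ⟨x, hx, rfl⟩
      exact ⟨x, fun i _ => (hx i).trans ((neg_le_neg hy).trans (neg_norm_le_apply y i)), rfl⟩)

lemma HJ_le_minNormBelowNegOne {x₀ : Fin n → ℝ} (hx₀ : A *ᵥ x₀ ≤ -1) (J : Set (Fin m)) :
    HJ A J ≤ minNormBelowNegOne A :=
  csSup_le ⟨_, 0, by simp, rfl⟩ (by
    rintro _ ⟨y, hy, rfl⟩
    exact sInf_feasible_le_minNormBelowNegOne hx₀ J hy)

lemma HJ_univ_eq_minNormBelowNegOne {x₀ : Fin n → ℝ} (hx₀ : A *ᵥ x₀ ≤ -1) :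
    HJ A Set.univ = minNormBelowNegOne A := by
  refine IsGreatest.csSup_eq ⟨⟨-1, ?_, ?_⟩, ?_⟩
  · exact (pi_norm_le_iff_of_nonneg zero_le_one).2 fun i => by simp
  · simp [minNormBelowNegOne, Pi.le_def]
  · rintro _ ⟨y, hy, rfl⟩
    exact sInf_feasible_le_minNormBelowNegOne hx₀ Set.univ hy

lemma aSurj_of_mulVec_le_neg_one {x₀ : Fin n → ℝ} (hx₀ : A *ᵥ x₀ ≤ -1) (J : Set (Fin m)) :
    ASurj A J := fun w => ⟨‖w‖ • x₀, fun i _ => by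
  rw [mulVec_smul, Pi.smul_apply, smul_eq_mul]
  have hx₀i : (A *ᵥ x₀) i ≤ -1 := hx₀ i
  nlinarith [neg_norm_le_apply w i, norm_nonneg w]⟩

theorem HoffA_eq_minNormBelowNegOne {x₀ : Fin n → ℝ} (hx₀ : A *ᵥ x₀ ≤ -1) :
    HoffA A = minNormBelowNegOne A :=
  IsGreatest.csSup_eq ⟨⟨Set.univ, aSurj_of_mulVec_le_neg_one hx₀ _,
    (HJ_univ_eq_minNormBelowNegOne hx₀).symm⟩, by
      rintro _ ⟨J, -, rfl⟩
      exact HJ_le_minNormBelowNegOne hx₀ J⟩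

lemma sum_le_dualNorm_transpose_mulVec_mul_norm {v : Fin m → ℝ} {x : Fin n → ℝ} (hv : 0 ≤ v)
    (hx : A *ᵥ x ≤ -1) : ∑ i, v i ≤ dualNorm (Aᵀ *ᵥ v) * ‖x‖ :=
  calc ∑ i, v i = v ⬝ᵥ 1 := (dotProduct_one v).symm
    _ ≤ v ⬝ᵥ -(A *ᵥ x) := dotProduct_le_dotProduct_of_nonneg_left (le_neg.1 hx) hv
    _ = (Aᵀ *ᵥ v) ⬝ᵥ -x := by
      rw [mulVec_transpose, ← dotProduct_mulVec, mulVec_neg]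
    _ ≤ dualNorm (Aᵀ *ᵥ v) * ‖x‖ := norm_neg x ▸ dotProduct_le_dualNorm_mul_norm _ _

open scoped Pointwise in
lemma exists_nonneg_mul_dualNorm_lt_sum {γ : ℝ} (hγ : 0 ≤ γ)
    (h : ∀ x : Fin n → ℝ, ‖x‖ ≤ γ → ¬ A *ᵥ x ≤ -1) :
    ∃ v : Fin m → ℝ, 0 ≤ v ∧ γ * dualNorm (Aᵀ *ᵥ v) < ∑ i, v i := by
  set C : Set (Fin m → ℝ) := A.mulVecLin '' closedBall 0 γ + Set.Ici (0 : Fin m → ℝ)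
  have hC : Convex ℝ C := ((convex_closedBall 0 γ).linear_image _).add (convex_Ici 0)
  have hCclosed : IsClosed C := isClosed_Ici.add_left_of_isCompact
    ((isCompact_closedBall 0 γ).image A.mulVecLin.continuous_of_finiteDimensional)
  have hmem : ∀ x s, ‖x‖ ≤ γ → 0 ≤ s → A *ᵥ x + s ∈ C := fun x s hx hs =>
    Set.add_mem_add ⟨x, mem_closedBall_zero_iff.2 hx, rfl⟩ hs
  have hnot : -1 ∉ C := by
    rintro ⟨_, ⟨x, hx, rfl⟩, s, hs, hxs⟩
    refine h x (mem_closedBall_zero_iff.1 hx) fun i => ?_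
    have := congrFun hxs i
    simp only [Pi.add_apply, mulVecLin_apply, Pi.neg_apply, Pi.one_apply] at this ⊢
    have hsi : 0 ≤ s i := Set.mem_Ici.1 hs i
    linarith
  obtain ⟨v, u, hfu, hCu⟩ := exists_dotProduct_lt_of_notMem hC hCclosed hnot
  have hu : u < 0 := by simpa using hCu _ (hmem 0 0 (by simpa using hγ) le_rfl)
  have hv : 0 ≤ v := fun i => by
    by_contra hvi
    push Not at hvi
    have := hCu _ (hmem 0 ((u / v i) • Pi.single i 1) (by simpa using hγ)
      (smul_nonneg (div_nonneg_of_nonpos hu.le hvi.le) (Pi.single_nonneg.2 zero_le_one)))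
    rw [mulVec_zero, zero_add, dotProduct_smul, dotProduct_single_one, smul_eq_mul,
      div_mul_cancel₀ _ hvi.ne] at this
    exact lt_irrefl u this
  obtain ⟨x, hx, hxv⟩ := exists_norm_le_one_dotProduct_eq_dualNorm (Aᵀ *ᵥ v)
  have hγx : ‖-γ • x‖ ≤ γ := by
    rw [norm_smul, Real.norm_eq_abs, abs_neg, abs_of_nonneg hγ]
    exact mul_le_of_le_one_right hγ hx
  have hlow := hCu _ (hmem _ 0 hγx le_rfl)
  rw [add_zero, dotProduct_mulVec, ← mulVec_transpose, dotProduct_smul, hxv] at hlow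
  rw [dotProduct_neg, dotProduct_one] at hfu
  refine ⟨v, hv, ?_⟩
  simp only [smul_eq_mul] at hlow
  linarith

lemma dualNorm_transpose_mulVec_pos {x₀ : Fin n → ℝ} (hx₀ : A *ᵥ x₀ ≤ -1) {v : Fin m → ℝ}
    (hv : 0 ≤ v) (hv₀ : 0 < ∑ i, v i) : 0 < dualNorm (Aᵀ *ᵥ v) :=
  pos_of_mul_pos_left (hv₀.trans_le (sum_le_dualNorm_transpose_mulVec_mul_norm hv hx₀))
    (norm_nonneg x₀)

lemma dualNorm_le_minNormBelowNegOne {x₀ : Fin n → ℝ} (hx₀ : A *ᵥ x₀ ≤ -1) {v : Fin m → ℝ}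
    (hv : 0 ≤ v) (hAv : dualNorm (Aᵀ *ᵥ v) ≤ 1) : dualNorm v ≤ minNormBelowNegOne A := by
  refine le_csInf ⟨_, x₀, hx₀, rfl⟩ ?_
  rintro _ ⟨x, hx, rfl⟩
  rw [dualNorm_of_nonneg hv]
  exact (sum_le_dualNorm_transpose_mulVec_mul_norm hv hx).trans
    (mul_le_of_le_one_left (norm_nonneg x) hAv)

theorem minNormBelowNegOne_eq_sSup_dual {x₀ : Fin n → ℝ} (hx₀ : A *ᵥ x₀ ≤ -1) :
    minNormBelowNegOne A = sSup {t | ∃ v : Fin m → ℝ, (∀ i, 0 ≤ v i) ∧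
      dualNorm (Aᵀ *ᵥ v) ≤ 1 ∧ t = dualNorm v} := by
  have hzero : (0 : ℝ) ∈ {t | ∃ v : Fin m → ℝ, (∀ i, 0 ≤ v i) ∧
      dualNorm (Aᵀ *ᵥ v) ≤ 1 ∧ t = dualNorm v} :=
    ⟨0, fun _ => le_rfl, by simp [dualNorm_eq_sum_abs], by simp [dualNorm_eq_sum_abs]⟩
  refine (csSup_eq_of_forall_le_of_forall_lt_exists_gt ⟨0, hzero⟩ ?_ ?_).symm
  · rintro _ ⟨v, hv, hAv, rfl⟩
    exact dualNorm_le_minNormBelowNegOne hx₀ hv hAv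
  intro γ hγ
  rcases lt_or_ge γ 0 with hγ₀ | hγ₀
  · exact ⟨0, hzero, hγ₀⟩
  have hbdd : BddBelow {r | ∃ x : Fin n → ℝ, A *ᵥ x ≤ -1 ∧ r = ‖x‖} :=
    ⟨0, by rintro _ ⟨x, -, rfl⟩; exact norm_nonneg x⟩
  have hγx : ∀ x : Fin n → ℝ, ‖x‖ ≤ γ → ¬ A *ᵥ x ≤ -1 := fun x hx hAx =>
    ((csInf_le hbdd ⟨x, hAx, rfl⟩).trans hx).not_gt hγ
  obtain ⟨v, hv, hlt⟩ := exists_nonneg_mul_dualNorm_lt_sum hγ₀ hγx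
  have hc := dualNorm_transpose_mulVec_pos hx₀ hv
    ((mul_nonneg hγ₀ (dualNorm_nonneg _)).trans_lt hlt)
  set c := dualNorm (Aᵀ *ᵥ v)
  refine ⟨dualNorm (c⁻¹ • v), ⟨c⁻¹ • v, smul_nonneg (inv_nonneg.2 hc.le) hv, ?_, rfl⟩, ?_⟩
  · rw [mulVec_smul, dualNorm_smul_of_nonneg (inv_nonneg.2 hc.le), inv_mul_cancel₀ hc.ne']
  · rw [dualNorm_smul_of_nonneg (inv_nonneg.2 hc.le), dualNorm_of_nonneg hv, inv_mul_eq_div,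
      lt_div_iff₀ hc]
    linarith

theorem sSup_dual_eq_one_div_sInf {x₀ : Fin n → ℝ} (hx₀ : A *ᵥ x₀ ≤ -1) :
    sSup {t | ∃ v : Fin m → ℝ, (∀ i, 0 ≤ v i) ∧ dualNorm (Aᵀ *ᵥ v) ≤ 1 ∧ t = dualNorm v} =
      1 / sInf {t | ∃ v : Fin m → ℝ, (∀ i, 0 ≤ v i) ∧
        dualNorm v = 1 ∧ t = dualNorm (Aᵀ *ᵥ v)} := by
  have hpos : ∀ v : Fin m → ℝ, 0 ≤ v → dualNorm v = 1 → 0 < dualNorm (Aᵀ *ᵥ v) :=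
    fun v hv hv₁ => dualNorm_transpose_mulVec_pos hx₀ hv
      (by rw [← dualNorm_of_nonneg hv, hv₁]; exact one_pos)
  refine sSup_eq_one_div_sInf_of_reciprocal ⟨minNormBelowNegOne A, ?_⟩ ?_ ?_ ?_ ?_
  · rintro _ ⟨v, hv, hAv, rfl⟩
    exact dualNorm_le_minNormBelowNegOne hx₀ hv hAv
  · rintro _ ⟨v, -, -, rfl⟩
    exact dualNorm_nonneg v
  · rintro _ ⟨v, hv, hv₁, rfl⟩
    exact hpos v hv hv₁
  · rintro _ ⟨v, hv, hv₁, rfl⟩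
    have hc := (inv_pos.2 (hpos v hv hv₁)).le
    refine ⟨(dualNorm (Aᵀ *ᵥ v))⁻¹ • v, fun i => mul_nonneg hc (hv i), ?_, ?_⟩
    · rw [mulVec_smul, dualNorm_smul_of_nonneg hc, inv_mul_cancel₀ (hpos v hv hv₁).ne']
    · rw [dualNorm_smul_of_nonneg hc, hv₁, mul_one, one_div]
  · rintro _ ⟨v, hv, hAv, rfl⟩ hs
    have hc := (inv_pos.2 hs).le
    refine ⟨_, ⟨(dualNorm v)⁻¹ • v, fun i => mul_nonneg hc (hv i), ?_, rfl⟩, ?_⟩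
    · rw [dualNorm_smul_of_nonneg hc, inv_mul_cancel₀ hs.ne']
    · rwa [mulVec_smul, dualNorm_smul_of_nonneg hc, mul_inv_cancel_left₀ hs.ne']

end Hoffman

/-- Proposition 2, surjective case: if `x ↦ Ax + ℝ^m_+` is
surjective, i.e. `Aℝ^n + ℝ^m_+ = ℝ^m`, then
`H(A) = max_{‖y‖≤1} min{‖x‖ : Ax ≤ y} = max{‖v‖* : v ≥ 0, ‖Aᵀv‖* ≤ 1}
      = 1 / min{‖Aᵀv‖* : v ≥ 0, ‖v‖* = 1}`. -/
theorem hoffman_surjective {m n : ℕ} (A : Matrix (Fin m) (Fin n) ℝ)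
    (hs : ∀ w : Fin m → ℝ, ∃ x : Fin n → ℝ, ∃ s : Fin m → ℝ,
      (∀ i, 0 ≤ s i) ∧ A.mulVec x + s = w) :
    HoffA A = sSup {t | ∃ y : Fin m → ℝ, ‖y‖ ≤ 1 ∧
        t = sInf {r | ∃ x : Fin n → ℝ, (∀ i, A.mulVec x i ≤ y i) ∧ r = ‖x‖}} ∧
    HoffA A = sSup {t | ∃ v : Fin m → ℝ, (∀ i, 0 ≤ v i) ∧
        dualNorm (A.transpose.mulVec v) ≤ 1 ∧ t = dualNorm v} ∧
    HoffA A = 1 / sInf {t | ∃ v : Fin m → ℝ, (∀ i, 0 ≤ v i) ∧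
        dualNorm v = 1 ∧ t = dualNorm (A.transpose.mulVec v)} := by
  obtain ⟨x₀, s, hs₀, hx₀s⟩ := hs (-1)
  have hx₀ : A *ᵥ x₀ ≤ -1 := fun i => by
    rw [← hx₀s, Pi.add_apply]
    exact le_add_of_nonneg_right (hs₀ i)
  have hHJ : HJ A Set.univ = sSup {t | ∃ y : Fin m → ℝ, ‖y‖ ≤ 1 ∧
      t = sInf {r | ∃ x : Fin n → ℝ, (∀ i, A.mulVec x i ≤ y i) ∧ r = ‖x‖}} := by
    simp only [HJ, Set.mem_univ, forall_const]
  have hα := HoffA_eq_minNormBelowNegOne hx₀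
  have hdual := minNormBelowNegOne_eq_sSup_dual hx₀
  exact ⟨hα.trans ((HJ_univ_eq_minNormBelowNegOne hx₀).symm.trans hHJ), hα.trans hdual,
    hα.trans (hdual.trans (sSup_dual_eq_one_div_sInf hx₀))⟩
end

section
/- Let A ∈ ℝ^{m×n} and L ⊆ {1,…,m}. Suppose 𝓕 ⊆ S(A) and 𝓘 ⊆ 2^{{1,…,m}} \ S(A) are such that for every J ⊆ {1,…,m}, either J ⊆ F for some F ∈ 𝓕, or I ⊆ J for some I ∈ 𝓘. Then H(A|L) = max_{F∈𝓕} H_F(A|L). -/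
open Matrix Metric

/-- `H_J(A|L) = max_{y ∈ ℝ^L, ‖y‖ ≤ 1} min{‖x‖ : A_J x ≤ y_J}`, with the
convention `y_j = 0` for `j ∉ L`. -/
noncomputable def HJL {m n : ℕ} (A : Matrix (Fin m) (Fin n) ℝ) (L J : Set (Fin m)) : ℝ :=
  sSup {t | ∃ y : Fin m → ℝ, (∀ i ∉ L, y i = 0) ∧ ‖y‖ ≤ 1 ∧
    t = sInf {r | ∃ x : Fin n → ℝ, (∀ i ∈ J, A.mulVec x i ≤ y i) ∧ r = ‖x‖}}

/-- The Hoffman constant `H(A|L) = max_{J ∈ S(A)} H_J(A|L)`. -/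
noncomputable def HoffAL {m n : ℕ} (A : Matrix (Fin m) (Fin n) ℝ) (L : Set (Fin m)) : ℝ :=
  sSup {t | ∃ J : Set (Fin m), ASurj A J ∧ t = HJL A L J}

/-- `dist_L(b, S) = inf{‖b − y‖ : y ∈ S, (b − y)_{L^c} = 0}`. -/
noncomputable def distL {m : ℕ} (L : Set (Fin m)) (b : Fin m → ℝ)
    (S : Set (Fin m → ℝ)) : ℝ :=
  sInf {r | ∃ y ∈ S, (∀ i ∉ L, b i - y i = 0) ∧ r = ‖b - y‖}

/-!
Every `A`-surjective `J` lies in some `F' ∈ 𝓕`: otherwise the covering hypothesis gives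
`I' ⊆ J` with `I' ∈ 𝓘`, and subsets of `A`-surjective sets are `A`-surjective. Since enlarging
`J` only adds constraints, the minimal solution norm, and hence `H_J(A|L)`, grows with `J`;
so the supremum over `S(A)` is attained on `𝓕 ⊆ S(A)`.
-/

variable {m n : ℕ} {A : Matrix (Fin m) (Fin n) ℝ} {J K : Set (Fin m)}

theorem ASurj.subset (hK : ASurj A K) (hJK : J ⊆ K) : ASurj A J := fun w => by
  obtain ⟨x, hx⟩ := hK w
  exact ⟨x, fun i hi => hx i (hJK hi)⟩

variable (A J) in
noncomputable def minSolutionNorm (y : Fin m → ℝ) : ℝ :=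
  sInf {r | ∃ x : Fin n → ℝ, (∀ i ∈ J, A.mulVec x i ≤ y i) ∧ r = ‖x‖}

theorem HJL_eq_sSup_minSolutionNorm (L : Set (Fin m)) :
    HJL A L J = sSup {t | ∃ y : Fin m → ℝ, (∀ i ∉ L, y i = 0) ∧ ‖y‖ ≤ 1 ∧
      t = minSolutionNorm A J y} :=
  rfl

theorem minSolutionNorm_mono (hK : ASurj A K) (hJK : J ⊆ K) (y : Fin m → ℝ) :
    minSolutionNorm A J y ≤ minSolutionNorm A K y := by
  obtain ⟨x, hx⟩ := hK y
  refine csInf_le_csInf ⟨0, ?_⟩ ⟨‖x‖, x, hx, rfl⟩ ?_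
  · rintro r ⟨x, -, rfl⟩
    exact norm_nonneg x
  · rintro r ⟨x, hx, rfl⟩
    exact ⟨x, fun i hi => hx i (hJK hi), rfl⟩

/-- A solution of `A_J x ≤ -1` solves `A_J x ≤ y_J` for every `y` in the unit ball of the
sup norm. -/
theorem ASurj.minSolutionNorm_bddAbove (hJ : ASurj A J) :
    ∃ C, ∀ y : Fin m → ℝ, ‖y‖ ≤ 1 → minSolutionNorm A J y ≤ C := by
  obtain ⟨x, hx⟩ := hJ fun _ => -1
  refine ⟨‖x‖, fun y hy => csInf_le ⟨0, ?_⟩ ⟨x, fun i hi => (hx i hi).trans ?_, rfl⟩⟩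
  · rintro r ⟨x, -, rfl⟩
    exact norm_nonneg x
  · have hyi : |y i| ≤ 1 := (norm_le_pi_norm y i).trans hy
    linarith [(abs_le.mp hyi).1]

theorem HJL_mono (L : Set (Fin m)) (hK : ASurj A K) (hJK : J ⊆ K) :
    HJL A L J ≤ HJL A L K := by
  obtain ⟨C, hC⟩ := hK.minSolutionNorm_bddAbove
  rw [HJL_eq_sSup_minSolutionNorm, HJL_eq_sSup_minSolutionNorm]
  refine csSup_le ⟨_, 0, fun _ _ => rfl, by simp, rfl⟩ ?_
  rintro t ⟨y, hyL, hy, rfl⟩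
  exact (minSolutionNorm_mono hK hJK y).trans
    (le_csSup ⟨C, by rintro _ ⟨z, -, hz, rfl⟩; exact hC z hz⟩ ⟨y, hyL, hy, rfl⟩)

/-- Corollary 2: if `𝓕 ⊆ S(A)` and `𝓘 ⊆ 2^{1..m} \ S(A)` jointly
certify all subsets of `{1,…,m}`, then `H(A|L) = max_{F ∈ 𝓕} H_F(A|L)`. -/
theorem hoffman_certificates_rest {m n : ℕ} (A : Matrix (Fin m) (Fin n) ℝ)
    (L : Set (Fin m)) (F I : Set (Set (Fin m)))
    (hF : ∀ J ∈ F, ASurj A J) (hI : ∀ J ∈ I, ¬ ASurj A J)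
    (hcover : ∀ J : Set (Fin m), (∃ F' ∈ F, J ⊆ F') ∨ (∃ I' ∈ I, I' ⊆ J)) :
    HoffAL A L = sSup {t | ∃ F' ∈ F, t = HJL A L F'} := by
  refine csSup_eq_csSup_of_forall_exists_le ?_ ?_
  · rintro t ⟨J, hJ, rfl⟩
    rcases hcover J with ⟨F', hF', hJF'⟩ | ⟨I', hI', hI'J⟩
    · exact ⟨_, ⟨F', hF', rfl⟩, HJL_mono L (hF F' hF') hJF'⟩
    · exact absurd (hJ.subset hI'J) (hI I' hI')
  · rintro t ⟨F', hF', rfl⟩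
    exact ⟨_, ⟨F', hF F' hF', rfl⟩, le_rfl⟩
end
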